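/- arXiv:2310.20539 — 3 statements merged into one kernel-verified Lean document; each statement's English description precedes it below -/
import Mathlib

section
/- The vector u₁ = (1/4, 3/4) is a fixed point of the 1-site marginal dynamics of the transfer matrix T: for the 4×4 stochastic matrix T with parameters D, R ≥ 0 and η = 3 given by T = [[1,0,0,0],[0,1−D,D−R,R/3],[0,D−R,1−D,R/3],[0,R,R,1−2R/3]] (in basis {II, IΩ, ΩI, ΩΩ}), we have T(u₁⊗u₁) = u₁⊗u₁; likewise u₂ = (1,0) satisfies T(u₂⊗u₂) = u₂⊗u₂. -/
open Matrix

/-- The transfer matrix of the diffusion-reaction model in the basis `{II, IΩ, ΩI, ΩΩ}`,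
with diffusion rate `D`, reaction rate `R`, and reaction ratio `η = 3`. -/
noncomputable def transferT (D R : ℝ) : Matrix (Fin 4) (Fin 4) ℝ :=
  !![1, 0, 0, 0;
     0, 1 - D, D - R, R / 3;
     0, D - R, 1 - D, R / 3;
     0, R, R, 1 - 2 * R / 3]

/-- The product distribution `u ⊗ u ∈ R⁴` of a single-site vector `u = (a, b)`. -/
noncomputable def prodVec (a b : ℝ) : Fin 4 → ℝ := ![a * a, a * b, a * b, b * b]

/-- `u₁ = (1/4, 3/4)` and `u₂ = (1, 0)` give fixed points of the transfer matrix: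
`T (u₁ ⊗ u₁) = u₁ ⊗ u₁` and `T (u₂ ⊗ u₂) = u₂ ⊗ u₂`. -/
theorem transfer_fixed_points (D R : ℝ) (h0R : 0 ≤ R) (hRD : R ≤ D) (hD1 : D ≤ 1) :
    (transferT D R).mulVec (prodVec (1 / 4) (3 / 4)) = prodVec (1 / 4) (3 / 4) ∧
    (transferT D R).mulVec (prodVec 1 0) = prodVec 1 0 := by
  constructor <;>
  · funext i
    fin_cases i <;>
      simp [transferT, prodVec, mulVec, dotProduct, Fin.sum_univ_four] <;> ring
end

section
/- In the discrete non-leaky SNN dynamics v(t+1) = v(t) − FF^T s(t) + Fx·Δt with v(0)=0, telescoping yields (v(t+1) − v(1))/(t·Δt) = Fx − FF^T r(t) where r(t) = (1/(t·Δt)) Σ_{s=1}^t s(s) is the firing rate; consequently ‖x_F − F^T r(t)‖₂ = ‖v(t+1) − v(1)‖_{(FF^T)†} / (t·Δt). -/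
open Matrix

/-- The `A`-norm of a vector: `‖v‖_A = √(vᵀ A v)`. -/
noncomputable def matNorm {n : ℕ} (A : Matrix (Fin n) (Fin n) ℝ) (v : Fin n → ℝ) : ℝ :=
  Real.sqrt (v ⬝ᵥ A.mulVec v)

lemma quad_helper {n : ℕ} (A B : Matrix (Fin n) (Fin n) ℝ) (w : Fin n → ℝ) :
    (A.mulVec w) ⬝ᵥ B.mulVec (A.mulVec w) = w ⬝ᵥ (Aᵀ * B * A).mulVec w := by
  rw [Matrix.dotProduct_mulVec, Matrix.vecMul_mulVec, ← Matrix.dotProduct_mulVec,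
    Matrix.mulVec_mulVec]

lemma sq_helper {n m : ℕ} (F : Matrix (Fin n) (Fin m) ℝ) (w : Fin n → ℝ) :
    (Fᵀ.mulVec w) ⬝ᵥ (Fᵀ.mulVec w) = w ⬝ᵥ (F * Fᵀ).mulVec w := by
  rw [Matrix.dotProduct_mulVec, Matrix.vecMul_transpose, Matrix.mulVec_mulVec,
    dotProduct_comm]

lemma telescope {n m : ℕ} (F : Matrix (Fin n) (Fin m) ℝ) (x : Fin m → ℝ)
    (Δt : ℝ) (s : ℕ → Fin n → ℝ) (v : ℕ → Fin n → ℝ)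
    (hdyn : ∀ t, v (t + 1) = v t - (F * Fᵀ).mulVec (s t) + Δt • F.mulVec x)
    (t : ℕ) :
    v (t + 1) = v 1 + ∑ k ∈ Finset.Icc 1 t, (Δt • F.mulVec x - (F * Fᵀ).mulVec (s k)) := by
  induction t with
  | zero => simp
  | succ t ih =>
      rw [hdyn (t + 1), ih, Finset.sum_Icc_succ_top (by omega : 1 ≤ t + 1)]
      abel


/-- Telescoping the discrete non-leaky SNN dynamics
`v(t+1) = v(t) − FFᵀ s(t) + Δt·Fx` gives
`(v(t+1) − v(1))/(tΔt) = Fx − FFᵀ r(t)` for the firing rate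
`r(t) = (1/(tΔt)) Σ_{k=1}^t s(k)`, and consequently
`‖x_F − Fᵀ r(t)‖₂ = ‖v(t+1) − v(1)‖_{(FFᵀ)†} / (tΔt)`. -/
theorem snn_potential_conservation {n m : ℕ}
    (F : Matrix (Fin n) (Fin m) ℝ) (P : Matrix (Fin n) (Fin n) ℝ)
    (hP1 : F * Fᵀ * P * (F * Fᵀ) = F * Fᵀ)
    (hP2 : P * (F * Fᵀ) * P = P)
    (hP3 : ((F * Fᵀ) * P)ᵀ = (F * Fᵀ) * P)
    (hP4 : (P * (F * Fᵀ))ᵀ = P * (F * Fᵀ))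
    (x xF : Fin m → ℝ)
    (hxF1 : F.mulVec xF = F.mulVec x) (hxF2 : ∃ r : Fin n → ℝ, xF = Fᵀ.mulVec r)
    (Δt : ℝ) (hΔt : 0 < Δt)
    (s : ℕ → Fin n → ℝ) (hs : ∀ t i, s t i = 0 ∨ s t i = 1)
    (v : ℕ → Fin n → ℝ)
    (hdyn : ∀ t, v (t + 1) = v t - (F * Fᵀ).mulVec (s t) + Δt • F.mulVec x)
    (t : ℕ) (ht : 1 ≤ t)
    (r : Fin n → ℝ) (hr : r = (1 / ((t : ℝ) * Δt)) • ∑ k ∈ Finset.Icc 1 t, s k) :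
    (1 / ((t : ℝ) * Δt)) • (v (t + 1) - v 1)
        = F.mulVec x - (F * Fᵀ).mulVec r ∧
    Real.sqrt ((xF - Fᵀ.mulVec r) ⬝ᵥ (xF - Fᵀ.mulVec r))
        = matNorm P (v (t + 1) - v 1) / ((t : ℝ) * Δt) := by
  have htΔ : (0:ℝ) < (t : ℝ) * Δt := by
    have h1t : (1:ℝ) ≤ (t:ℝ) := by exact_mod_cast ht
    nlinarith
  have hne : ((t : ℝ) * Δt) ≠ 0 := ne_of_gt htΔ
  have hcard : (Finset.Icc 1 t).card = t := by rw [Nat.card_Icc]; omega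
  have hmsum : (F * Fᵀ).mulVec (∑ k ∈ Finset.Icc 1 t, s k)
      = ∑ k ∈ Finset.Icc 1 t, (F * Fᵀ).mulVec (s k) := by
    exact map_sum (Matrix.mulVecLin (F * Fᵀ)) s (Finset.Icc 1 t)
  have hsum : v (t + 1) - v 1
      = ((t : ℝ) * Δt) • F.mulVec x - (F * Fᵀ).mulVec (∑ k ∈ Finset.Icc 1 t, s k) := by
    rw [telescope F x Δt s v hdyn t, hmsum, Finset.sum_sub_distrib, Finset.sum_const, hcard]
    have : t • (Δt • F.mulVec x) = ((t : ℝ) * Δt) • F.mulVec x := by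
      rw [← Nat.cast_smul_eq_nsmul ℝ, smul_smul]
    rw [this]; abel
  have h1 : (1 / ((t : ℝ) * Δt)) • (v (t + 1) - v 1)
      = F.mulVec x - (F * Fᵀ).mulVec r := by
    rw [hsum, smul_sub, smul_smul, one_div_mul_cancel hne, one_smul, hr,
      Matrix.mulVec_smul]
  refine ⟨h1, ?_⟩
  obtain ⟨w', hw'⟩ := hxF2
  set w : Fin n → ℝ := w' - r with hw
  have hu : xF - Fᵀ.mulVec r = Fᵀ.mulVec w := by
    rw [hw, Matrix.mulVec_sub, hw']
  have hAt : (F * Fᵀ)ᵀ = F * Fᵀ := by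
    rw [Matrix.transpose_mul, Matrix.transpose_transpose]
  have hvdiff : v (t + 1) - v 1 = ((t : ℝ) * Δt) • (F * Fᵀ).mulVec w := by
    have hd : F.mulVec x - (F * Fᵀ).mulVec r = (F * Fᵀ).mulVec w := by
      rw [← hxF1, ← Matrix.mulVec_mulVec, ← Matrix.mulVec_sub, hu,
        Matrix.mulVec_mulVec]
    have := congrArg (((t : ℝ) * Δt) • ·) h1
    simp only [smul_smul, mul_one_div, div_self hne, one_smul] at this
    rw [this, hd]
  rw [hu, hvdiff, matNorm]
  have hq : (((t : ℝ) * Δt) • (F * Fᵀ).mulVec w) ⬝ᵥ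
      P.mulVec (((t : ℝ) * Δt) • (F * Fᵀ).mulVec w)
      = (((t : ℝ) * Δt))^2 * (w ⬝ᵥ (F * Fᵀ).mulVec w) := by
    rw [Matrix.mulVec_smul, smul_dotProduct, dotProduct_smul, quad_helper, hAt, hP1,
      smul_eq_mul, smul_eq_mul]
    ring
  rw [hq, sq_helper, Real.sqrt_mul (by positivity), Real.sqrt_sq (le_of_lt htΔ)]
  field_simp
end

section
/- The sets {S_{u}} for u ranging over the ideal polytope P_{F,1−τ}, where S_u = (u + Cone(F_{Γ(u)})) ∩ P_{F,1}, form a partition of the dual polytope P_{F,1}, provided F is non-degenerate (every m×m submatrix of F has full rank). -/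
open Matrix

/-- The signed rows `±F_i` of a matrix `F`. -/
def signedRow {n m : ℕ} (F : Matrix (Fin n) (Fin m) ℝ) : Fin n × Bool → (Fin m → ℝ) :=
  fun p => if p.2 then F p.1 else -F p.1

/-- The cone generated by the signed rows active at `u` on level `1 − τ`:
nonnegative combinations of the signed rows `g` with `⟨g, u⟩ = 1 − τ`. -/
def activeCone {n m : ℕ} (F : Matrix (Fin n) (Fin m) ℝ) (τ : ℝ) (u : Fin m → ℝ) :
    Set (Fin m → ℝ) :=
  {w | ∃ a : Fin n × Bool → ℝ, (∀ j, 0 ≤ a j) ∧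
        (∀ j, a j ≠ 0 → signedRow F j ⬝ᵥ u = 1 - τ) ∧
        w = ∑ j, a j • signedRow F j}

/-!
The point `u` attached to `w` is the metric projection of `w` onto the polytope
`P_{F,1−τ} = {x | ⟨±F_i, x⟩ ≤ 1 − τ}`. The variational inequality of the projection says that
`w − u` lies in the normal cone of the polytope at `u`, and for a polyhedron the normal cone is
the cone spanned by the active constraint normals: this is Farkas' lemma, which applies because
finitely generated cones are closed (by conic Carathéodory, they are finite unions of images of
orthants under injective linear maps). Uniqueness is the monotonicity of normal cones:
if `w − u` and `w − u'` are normal at `u` and `u'`, then `‖u − u'‖² ≤ 0`.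
-/

open Set Function PointedCone

section FiniteCone

variable {ι E : Type*} [AddCommGroup E] [Module ℝ E]

theorem PointedCone.mem_hull_image_iff [Fintype ι] {g : ι → E} {S : Set ι} {x : E} :
    x ∈ hull ℝ (g '' S) ↔ ∃ a : ι → ℝ, 0 ≤ a ∧ support a ⊆ S ∧ ∑ j, a j • g j = x := by
  constructor
  · intro hx
    induction hx using Submodule.span_induction with
    | mem y hy =>
      classical
      obtain ⟨j, hj, rfl⟩ := hy
      refine ⟨Pi.single j 1, Pi.single_nonneg.2 zero_le_one, fun i hi => ?_, by simp⟩
      rwa [mem_singleton_iff.1 (Pi.support_single_subset hi)]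
    | zero => exact ⟨0, le_rfl, by simp, by simp⟩
    | add y z _ _ hy hz =>
      obtain ⟨a, ha, haS, rfl⟩ := hy
      obtain ⟨b, hb, hbS, rfl⟩ := hz
      refine ⟨a + b, add_nonneg ha hb, (support_add a b).trans (union_subset haS hbS), ?_⟩
      simp only [Pi.add_apply, add_smul, Finset.sum_add_distrib]
    | smul r y _ hy =>
      obtain ⟨a, ha, haS, rfl⟩ := hy
      refine ⟨(r : ℝ) • a, smul_nonneg r.2 ha, (support_const_smul_subset _ a).trans haS, ?_⟩
      simp [mul_smul, Finset.smul_sum]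
  · rintro ⟨a, ha, haS, rfl⟩
    refine Submodule.sum_mem _ fun j _ => ?_
    by_cases h : a j = 0
    · simp [h]
    · exact (hull ℝ _).smul_mem (ha j) (subset_hull ⟨j, haS h, rfl⟩)

theorem PointedCone.mem_hull_range_iff [Fintype ι] {g : ι → E} {x : E} :
    x ∈ hull ℝ (range g) ↔ ∃ a : ι → ℝ, 0 ≤ a ∧ ∑ j, a j • g j = x := by
  simp [← image_univ, mem_hull_image_iff]

theorem exists_nonneg_comb_support_ssubset [Fintype ι] {g : ι → E} {a c : ι → ℝ} (ha : 0 ≤ a)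
    (hc : ∑ j, c j • g j = 0) (hc0 : c ≠ 0) (hca : support c ⊆ support a) :
    ∃ b : ι → ℝ, 0 ≤ b ∧ ∑ j, b j • g j = ∑ j, a j • g j ∧ support b ⊂ support a := by
  wlog hpos : ∃ j, 0 < c j generalizing c
  · obtain ⟨j, hj⟩ := ne_iff.1 hc0
    refine this (c := -c) (by simp [neg_smul, hc]) (neg_ne_zero.2 hc0)
      (by rwa [support_neg]) ⟨j, ?_⟩
    push Not at hpos
    exact neg_pos.2 ((hpos j).lt_of_ne hj)
  classical
  obtain ⟨i, hi, hmin⟩ := Finset.exists_min_image {j | 0 < c j} (fun j => a j / c j)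
    (by simpa [Finset.Nonempty] using hpos)
  simp only [Finset.mem_filter, Finset.mem_univ, true_and] at hi hmin
  set t := a i / c i
  have ht : 0 ≤ t := div_nonneg (ha i) hi.le
  have hai : a i ≠ 0 := hca hi.ne'
  refine ⟨a - t • c, fun j => ?_, ?_, ?_⟩
  · rcases lt_or_ge 0 (c j) with hcj | hcj
    · have := (le_div_iff₀ hcj).1 (hmin j hcj)
      simp only [Pi.zero_apply, Pi.sub_apply, Pi.smul_apply, smul_eq_mul]
      linarith
    · have := mul_nonpos_of_nonneg_of_nonpos ht hcj
      have haj : 0 ≤ a j := ha j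
      simp only [Pi.zero_apply, Pi.sub_apply, Pi.smul_apply, smul_eq_mul]
      linarith
  · simp only [Pi.sub_apply, Pi.smul_apply, smul_eq_mul, sub_smul, mul_smul,
      Finset.sum_sub_distrib, ← Finset.smul_sum, hc, smul_zero, sub_zero]
  · have hsub : support (a - t • c) ⊆ support a := fun j hj haj => hj <| by
      have hcj : c j = 0 := notMem_support.1 fun h => hca h haj
      simp [haj, hcj]
    refine (ssubset_iff_of_subset hsub).2 ⟨i, hai, fun h => h ?_⟩
    simp [t, div_mul_cancel₀ _ hi.ne']

theorem PointedCone.exists_linearIndepOn_mem_hull_image [Fintype ι] {g : ι → E} {x : E}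
    (hx : x ∈ hull ℝ (range g)) : ∃ s : Set ι, LinearIndepOn ℝ g s ∧ x ∈ hull ℝ (g '' s) := by
  obtain ⟨a, ⟨ha, rfl⟩, hmin⟩ := exists_minimalFor_of_wellFoundedLT
    (fun a : ι → ℝ => 0 ≤ a ∧ ∑ j, a j • g j = x) (fun a => (support a).ncard)
    (mem_hull_range_iff.1 hx)
  refine ⟨support a, ?_, mem_hull_image_iff.2 ⟨a, ha, subset_rfl, rfl⟩⟩
  by_contra hdep
  obtain ⟨c, hcsupp, hc, hc0⟩ := linearDepOn_iff'.1 hdep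
  obtain ⟨b, hb, hbsum, hbsub⟩ := exists_nonneg_comb_support_ssubset ha (c := c)
    (by simpa [Finsupp.linearCombination_apply, Finsupp.sum_fintype] using hc)
    (fun h => hc0 (Finsupp.ext (congrFun h)))
    (by simpa using (Finsupp.mem_supported _ _).1 hcsupp)
  exact (ncard_lt_ncard hbsub).not_ge (hmin ⟨hb, hbsum⟩ (ncard_lt_ncard hbsub).le)

variable [TopologicalSpace E] [IsTopologicalAddGroup E] [ContinuousSMul ℝ E] [T2Space E]

theorem PointedCone.isClosed_hull_range_of_linearIndependent [Finite ι] {g : ι → E}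
    (hg : LinearIndependent ℝ g) : IsClosed (hull ℝ (range g) : Set E) := by
  cases nonempty_fintype ι
  have hhull : (hull ℝ (range g) : Set E) = Fintype.linearCombination ℝ g '' Ici 0 := by
    ext x
    simp [mem_hull_range_iff, Fintype.linearCombination_apply]
  rw [hhull]
  exact (LinearMap.isClosedEmbedding_of_injective (LinearMap.ker_eq_bot.2
    hg.fintypeLinearCombination_injective)).isClosedMap _ isClosed_Ici

theorem PointedCone.isClosed_hull_range [Finite ι] (g : ι → E) :
    IsClosed (hull ℝ (range g) : Set E) := by
  cases nonempty_fintype ι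
  have hcarath : (hull ℝ (range g) : Set E) =
      ⋃ (s : Set ι) (_ : LinearIndepOn ℝ g s), (hull ℝ (g '' s) : Set E) := by
    ext x
    simp only [mem_iUnion, SetLike.mem_coe, exists_prop]
    refine ⟨exists_linearIndepOn_mem_hull_image, fun ⟨s, _, hx⟩ => ?_⟩
    exact Submodule.span_mono (image_subset_range g s) hx
  rw [hcarath]
  refine isClosed_iUnion_of_finite fun s => isClosed_iUnion_of_finite fun hs => ?_
  rw [image_eq_range]
  exact isClosed_hull_range_of_linearIndependent hs

theorem PointedCone.isClosed_hull_image [Finite ι] (g : ι → E) (S : Set ι) :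
    IsClosed (hull ℝ (g '' S) : Set E) := by
  rw [image_eq_range]
  exact isClosed_hull_range _

end FiniteCone

open Filter Topology
open scoped InnerProductSpace

section Polyhedron

variable {ι E : Type*} [NormedAddCommGroup E] [InnerProductSpace ℝ E]

def polyhedron (g : ι → E) (c : ι → ℝ) : Set E := {x | ∀ j, ⟪g j, x⟫_ℝ ≤ c j}

def activeHull (g : ι → E) (c : ι → ℝ) (u : E) : PointedCone ℝ E :=
  hull ℝ (g '' {j | ⟪g j, u⟫_ℝ = c j})

variable {g : ι → E} {c : ι → ℝ}

theorem convex_polyhedron : Convex ℝ (polyhedron g c) := by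
  simp only [polyhedron, ofPred_forall]
  exact convex_iInter fun j => convex_halfSpace_le
    (isBoundedBilinearMap_inner.isBoundedLinearMap_right (g j)).toIsLinearMap (c j)

theorem isClosed_polyhedron : IsClosed (polyhedron g c) := by
  simp only [polyhedron, ofPred_forall]
  exact isClosed_iInter fun j =>
    isClosed_le (continuous_const.inner continuous_id) continuous_const

theorem inner_sub_nonpos_of_mem_activeHull {u v x : E} (hv : v ∈ activeHull g c u)
    (hx : x ∈ polyhedron g c) : ⟪v, x - u⟫_ℝ ≤ 0 := by
  induction hv using Submodule.span_induction with
  | mem y hy =>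
    obtain ⟨j, hj, rfl⟩ := hy
    rw [inner_sub_right, hj]
    linarith [hx j]
  | zero => simp
  | add y z _ _ hy hz => rw [inner_add_left]; linarith
  | smul r y _ hy =>
    change ⟪(r : ℝ) • y, x - u⟫_ℝ ≤ 0
    rw [real_inner_smul_left]
    exact mul_nonpos_of_nonneg_of_nonpos r.2 hy

theorem eq_of_inner_sub_nonpos {w u u' : E} (h : ⟪w - u, u' - u⟫_ℝ ≤ 0)
    (h' : ⟪w - u', u - u'⟫_ℝ ≤ 0) : u = u' := by
  have hsq : ‖u - u'‖ ^ 2 = ⟪w - u, u' - u⟫_ℝ + ⟪w - u', u - u'⟫_ℝ :=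
    calc ‖u - u'‖ ^ 2 = ⟪u' - u, u' - u⟫_ℝ := by rw [real_inner_self_eq_norm_sq, norm_sub_rev]
      _ = ⟪(w - u) - (w - u'), u' - u⟫_ℝ := by rw [sub_sub_sub_cancel_left]
      _ = _ := by rw [inner_sub_left, ← neg_sub u' u, inner_neg_right, sub_eq_add_neg]
  rw [← sub_eq_zero, ← norm_eq_zero]
  nlinarith [norm_nonneg (u - u')]

variable [Finite ι]

theorem eventually_add_smul_mem_polyhedron {u z : E} (hu : u ∈ polyhedron g c)
    (hz : ∀ j, ⟪g j, u⟫_ℝ = c j → ⟪g j, z⟫_ℝ ≤ 0) :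
    ∀ᶠ ε in 𝓝[>] (0 : ℝ), u + ε • z ∈ polyhedron g c := by
  refine eventually_all.2 fun j => ?_
  rcases (hu j).eq_or_lt with hj | hj
  · filter_upwards [self_mem_nhdsWithin] with ε (hε : 0 < ε)
    rw [inner_add_right, real_inner_smul_right, hj]
    linarith [mul_nonpos_of_nonneg_of_nonpos hε.le (hz j hj)]
  · have hcont : Continuous fun ε : ℝ => ⟪g j, u + ε • z⟫_ℝ := by fun_prop
    have := (hcont.tendsto 0).eventually_lt_const (by simpa using hj)
    exact (this.filter_mono nhdsWithin_le_nhds).mono fun ε hε => hε.le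

variable [FiniteDimensional ℝ E]

theorem mem_activeHull_of_forall_inner_sub_nonpos {u v : E} (hu : u ∈ polyhedron g c)
    (hv : ∀ x ∈ polyhedron g c, ⟪v, x - u⟫_ℝ ≤ 0) : v ∈ activeHull g c u := by
  -- Farkas: a direction separating `v` from the active cone leads from `u` into the
  -- polyhedron for a short step, along which `⟪v, ·⟫` increases.
  by_contra hvC
  obtain ⟨y, hyC, hvy⟩ := ProperCone.hyperplane_separation'
    ⟨activeHull g c u, isClosed_hull_image g _⟩ hvC
  have hz : ∀ j, ⟪g j, u⟫_ℝ = c j → ⟪g j, -y⟫_ℝ ≤ 0 := fun j hj => by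
    rw [inner_neg_right, neg_nonpos]
    exact hyC _ (subset_hull ⟨j, hj, rfl⟩)
  obtain ⟨ε, hεK, hε⟩ :=
    ((eventually_add_smul_mem_polyhedron hu hz).and self_mem_nhdsWithin).exists
  have := hv _ hεK
  rw [add_sub_cancel_left, real_inner_smul_right, inner_neg_right] at this
  nlinarith [hε]

theorem existsUnique_sub_mem_activeHull (hK : (polyhedron g c).Nonempty) (w : E) :
    ∃! u, u ∈ polyhedron g c ∧ w - u ∈ activeHull g c u := by
  obtain ⟨u, hu, hproj⟩ := exists_norm_eq_iInf_of_complete_convex hK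
    isClosed_polyhedron.isComplete convex_polyhedron w
  have hnormal := (norm_eq_iInf_iff_real_inner_le_zero convex_polyhedron hu).1 hproj
  refine ⟨u, ⟨hu, mem_activeHull_of_forall_inner_sub_nonpos hu hnormal⟩, ?_⟩
  rintro u' ⟨hu', hwu'⟩
  exact (eq_of_inner_sub_nonpos (hnormal u' hu')
    (inner_sub_nonpos_of_mem_activeHull hwu' hu)).symm

end Polyhedron

open WithLp

section SignedRows

variable {n m : ℕ} (F : Matrix (Fin n) (Fin m) ℝ)

theorem forall_signedRow_dotProduct_le_iff {x : Fin m → ℝ} {b : ℝ} :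
    (∀ j, signedRow F j ⬝ᵥ x ≤ b) ↔ ∀ i, |F i ⬝ᵥ x| ≤ b := by
  simp [signedRow, abs_le, forall_and, neg_le, and_comm]

theorem inner_toLp_signedRow (j : Fin n × Bool) (x : Fin m → ℝ) :
    ⟪toLp 2 (signedRow F j), toLp 2 x⟫_ℝ = signedRow F j ⬝ᵥ x := by
  rw [EuclideanSpace.inner_toLp_toLp, star_trivial, dotProduct_comm]

theorem toLp_mem_polyhedron_signedRow_iff {x : Fin m → ℝ} {b : ℝ} :
    toLp 2 x ∈ polyhedron (fun j => toLp 2 (signedRow F j)) (fun _ => b) ↔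
      ∀ i, |F i ⬝ᵥ x| ≤ b := by
  simp only [polyhedron, mem_ofPred_eq, inner_toLp_signedRow, forall_signedRow_dotProduct_le_iff]

theorem mem_activeCone_iff_toLp_mem_activeHull {τ : ℝ} {u v : Fin m → ℝ} :
    v ∈ activeCone F τ u ↔
      toLp 2 v ∈ activeHull (fun j => toLp 2 (signedRow F j)) (fun _ => 1 - τ) (toLp 2 u) := by
  simp only [activeHull, mem_hull_image_iff, inner_toLp_signedRow, ← toLp_smul, ← toLp_sum,
    (toLp_injective 2).eq_iff]
  exact exists_congr fun a => and_congr Iff.rfl (and_congr Iff.rfl eq_comm)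

end SignedRows

theorem dual_polytope_partition_general {n m : ℕ}
    (F : Matrix (Fin n) (Fin m) ℝ) (τ : ℝ) (hτ1 : τ < 1) :
    ∀ w : Fin m → ℝ, (∀ i, |F i ⬝ᵥ w| ≤ 1) →
      ∃! u : Fin m → ℝ,
        (∀ i, |F i ⬝ᵥ u| ≤ 1 - τ) ∧ (w - u) ∈ activeCone F τ u := by
  intro w _
  have hK : (polyhedron (fun j => toLp 2 (signedRow F j)) (fun _ => 1 - τ)).Nonempty :=
    ⟨toLp 2 0, (toLp_mem_polyhedron_signedRow_iff F).2 fun i => by simpa using hτ1.le⟩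
  refine ((WithLp.equiv 2 _).symm.existsUnique_congr fun u => ?_).2
    (existsUnique_sub_mem_activeHull hK (toLp 2 w))
  rw [equiv_symm_apply, toLp_mem_polyhedron_signedRow_iff, mem_activeCone_iff_toLp_mem_activeHull,
    toLp_sub]

/-- Partition of the dual polytope: if `F` is non-degenerate (every `m` rows are
linearly independent), then every point `w` of `P_{F,1} = {u : ‖Fu‖_∞ ≤ 1}` belongs to
`S_u = (u + Cone(F_{Γ(u)})) ∩ P_{F,1}` for a unique `u` in the ideal polytope
`P_{F,1−τ}`. -/
theorem dual_polytope_partition {n m : ℕ}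
    (F : Matrix (Fin n) (Fin m) ℝ) (τ : ℝ) (hτ0 : 0 < τ) (hτ1 : τ < 1)
    (hnd : ∀ s : Finset (Fin n), s.card = m →
      LinearIndependent ℝ (fun i : s => F (i : Fin n))) :
    ∀ w : Fin m → ℝ, (∀ i, |F i ⬝ᵥ w| ≤ 1) →
      ∃! u : Fin m → ℝ,
        (∀ i, |F i ⬝ᵥ u| ≤ 1 - τ) ∧ (w - u) ∈ activeCone F τ u :=
  dual_polytope_partition_general F τ hτ1
end
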